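/- arXiv:2409.06320 — 2 statements merged into one kernel-verified Lean document; each statement's English description precedes it below -/
import Mathlib

section
/- In a scalar Gaussian channel Y = X + Ω with Ω ~ N(0, σ²) independent of the real random variable X (with E[X²] < ∞), the derivative of the posterior mean estimator f(y) = E[X | Y = y] with respect to y equals the posterior variance divided by the noise variance: f'(y) = Var(X | Y = y)/σ². -/
open MeasureTheory Real

/-- Centered Gaussian density with variance `v`. -/
noncomputable def pG (x v : ℝ) : ℝ :=
  (Real.sqrt (2 * Real.pi * v))⁻¹ * Real.exp (-x ^ 2 / (2 * v))

lemma pG_pos {v : ℝ} (hv : 0 < v) (x : ℝ) : 0 < pG x v := by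
  have : 0 < Real.sqrt (2 * Real.pi * v) := Real.sqrt_pos.mpr (by positivity)
  exact mul_pos (inv_pos.mpr this) (Real.exp_pos _)

lemma pG_le {v : ℝ} (hv : 0 < v) (x : ℝ) :
    pG x v ≤ (Real.sqrt (2 * Real.pi * v))⁻¹ := by
  have h : Real.exp (-x ^ 2 / (2 * v)) ≤ 1 := by
    apply Real.exp_le_one_iff.mpr
    rw [neg_div]
    exact neg_nonpos.mpr (by positivity)
  have hs : 0 ≤ (Real.sqrt (2 * Real.pi * v))⁻¹ := by positivity
  calc pG x v ≤ (Real.sqrt (2 * Real.pi * v))⁻¹ * 1 := mul_le_mul_of_nonneg_left h hs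
    _ = _ := mul_one _

lemma abs_mul_pG_le {v : ℝ} (hv : 0 < v) (x : ℝ) :
    |x| * pG x v ≤ Real.sqrt v * (Real.sqrt (2 * Real.pi * v))⁻¹ := by
  have hs : 0 < Real.sqrt v := Real.sqrt_pos.mpr hv
  have key : |x| * Real.exp (-x ^ 2 / (2 * v)) ≤ Real.sqrt v := by
    have h2 : x ^ 2 / (2 * v) + 1 ≤ Real.exp (x ^ 2 / (2 * v)) := Real.add_one_le_exp _
    have h3 : |x| ≤ (x ^ 2 / (2 * v) + 1) * Real.sqrt v := by
      rw [div_add' _ _ _ (by positivity), div_mul_eq_mul_div, le_div_iff₀ (by positivity)]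
      nlinarith [sq_nonneg (|x| - Real.sqrt v), Real.sq_sqrt hv.le, sq_abs x, hs]
    have h1 : |x| ≤ Real.sqrt v * Real.exp (x ^ 2 / (2 * v)) := by
      calc |x| ≤ (x ^ 2 / (2 * v) + 1) * Real.sqrt v := h3
        _ ≤ Real.exp (x ^ 2 / (2 * v)) * Real.sqrt v := mul_le_mul_of_nonneg_right h2 hs.le
        _ = _ := mul_comm _ _
    calc |x| * Real.exp (-x ^ 2 / (2 * v))
        ≤ Real.sqrt v * Real.exp (x ^ 2 / (2 * v)) * Real.exp (-x ^ 2 / (2 * v)) :=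
          mul_le_mul_of_nonneg_right h1 (Real.exp_pos _).le
      _ = Real.sqrt v * Real.exp (x ^ 2 / (2 * v) + -x ^ 2 / (2 * v)) := by
          rw [mul_assoc, Real.exp_add]
      _ = Real.sqrt v := by rw [neg_div, add_neg_cancel, Real.exp_zero, mul_one]
  have heq : |x| * pG x v
      = (Real.sqrt (2 * Real.pi * v))⁻¹ * (|x| * Real.exp (-x ^ 2 / (2 * v))) := by
    unfold pG; ring
  have hc : 0 ≤ (Real.sqrt (2 * Real.pi * v))⁻¹ := by positivity
  rw [heq]
  calc (Real.sqrt (2 * Real.pi * v))⁻¹ * (|x| * Real.exp (-x ^ 2 / (2 * v)))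
      ≤ (Real.sqrt (2 * Real.pi * v))⁻¹ * Real.sqrt v := mul_le_mul_of_nonneg_left key hc
    _ = _ := mul_comm _ _

lemma measurable_pG_comp {v : ℝ} {g : ℝ → ℝ} (hg : Measurable g) :
    Measurable (fun x => pG (g x) v) := by
  unfold pG; fun_prop

lemma hasDerivAt_pG {v : ℝ} (hv : 0 < v) (x z : ℝ) :
    HasDerivAt (fun z => pG (z - x) v) ((x - z) / v * pG (z - x) v) z := by
  have h1 : HasDerivAt (fun z : ℝ => z - x) 1 z := (hasDerivAt_id z).sub_const x
  have h2 : HasDerivAt (fun z : ℝ => -(z - x) ^ 2 / (2 * v)) ((x - z) / v) z := by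
    have := ((h1.pow 2).neg).div_const (2 * v)
    refine this.congr_deriv ?_
    field_simp
    ring
  have h3 := (h2.exp).const_mul ((Real.sqrt (2 * Real.pi * v))⁻¹)
  have heq : HasDerivAt (fun z => pG (z - x) v)
      ((Real.sqrt (2 * Real.pi * v))⁻¹ * (Real.exp (-(z - x) ^ 2 / (2 * v)) * ((x - z) / v))) z := h3
  convert heq using 1
  unfold pG; ring

lemma integrable_weighted (prior : Measure ℝ) [IsProbabilityMeasure prior]
    {σ2 : ℝ} (hσ2 : 0 < σ2) {w : ℝ → ℝ} (hw : Measurable w)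
    (hwint : Integrable w prior) (z : ℝ) :
    Integrable (fun x => w x * pG (z - x) σ2) prior := by
  apply Integrable.mono' (hwint.abs.mul_const ((Real.sqrt (2 * Real.pi * σ2))⁻¹))
  · exact (hw.mul (measurable_pG_comp (measurable_const.sub measurable_id))).aestronglyMeasurable
  · filter_upwards with x
    rw [Real.norm_eq_abs, abs_mul, abs_of_nonneg (pG_pos hσ2 _).le]
    exact mul_le_mul_of_nonneg_left (pG_le hσ2 _) (abs_nonneg _)

lemma key_deriv (prior : Measure ℝ) [IsProbabilityMeasure prior]
    {σ2 : ℝ} (hσ2 : 0 < σ2) {w : ℝ → ℝ} (hw : Measurable w)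
    (hwint : Integrable w prior) (hxwint : Integrable (fun x => x * w x) prior) (y : ℝ) :
    HasDerivAt (fun z => ∫ x, w x * pG (z - x) σ2 ∂prior)
      (((∫ x, x * w x * pG (y - x) σ2 ∂prior) - y * ∫ x, w x * pG (y - x) σ2 ∂prior) / σ2) y := by
  set c : ℝ := (Real.sqrt (2 * Real.pi * σ2))⁻¹ with hc
  have hc0 : 0 ≤ c := by positivity
  have hFmeas : ∀ z : ℝ, AEStronglyMeasurable (fun x => w x * pG (z - x) σ2) prior :=
    fun z => (hw.mul (measurable_pG_comp (measurable_const.sub measurable_id))).aestronglyMeasurable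
  have main := hasDerivAt_integral_of_dominated_loc_of_deriv_le (μ := prior)
    (F := fun z x => w x * pG (z - x) σ2)
    (F' := fun z x => w x * ((x - z) / σ2 * pG (z - x) σ2))
    (x₀ := y) (bound := fun x => |w x| * (Real.sqrt σ2 * c / σ2))
    (s := Metric.ball y 1) (Metric.ball_mem_nhds y one_pos)
    (Filter.Eventually.of_forall fun z => hFmeas z)
    (integrable_weighted prior hσ2 hw hwint y)
    ((hw.mul (((measurable_id.sub measurable_const).div_const σ2).mul
      (measurable_pG_comp (measurable_const.sub measurable_id)))).aestronglyMeasurable)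
    (by
      filter_upwards with x z hz
      rw [Real.norm_eq_abs, abs_mul]
      apply mul_le_mul_of_nonneg_left _ (abs_nonneg _)
      rw [abs_mul, abs_div, abs_of_pos hσ2, div_mul_eq_mul_div, div_le_div_iff₀ hσ2 hσ2]
      have h1 : |x - z| * |pG (z - x) σ2| ≤ Real.sqrt σ2 * c := by
        rw [abs_of_nonneg (pG_pos hσ2 _).le, abs_sub_comm x z]
        exact abs_mul_pG_le hσ2 (z - x)
      calc |x - z| * |pG (z - x) σ2| * σ2 ≤ Real.sqrt σ2 * c * σ2 :=
            mul_le_mul_of_nonneg_right h1 hσ2.le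
        _ = _ := by ring)
    ((hwint.abs.mul_const _))
    (by
      filter_upwards with x z hz
      exact (hasDerivAt_pG hσ2 x z).const_mul (w x))
  obtain ⟨hint, hder⟩ := main
  have hI0 : Integrable (fun x => w x * pG (y - x) σ2) prior :=
    integrable_weighted prior hσ2 hw hwint y
  have hI1 : Integrable (fun x => x * w x * pG (y - x) σ2) prior :=
    integrable_weighted prior hσ2 (measurable_id.mul hw) hxwint y
  have heq : (fun x => w x * ((x - y) / σ2 * pG (y - x) σ2))
      = fun x => (x * w x * pG (y - x) σ2 - y * (w x * pG (y - x) σ2)) / σ2 := by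
    funext x; field_simp
  rw [heq] at hder
  rw [integral_div, integral_sub hI1 (hI0.const_mul y), integral_const_mul] at hder
  exact hder

/-- Tweedie-type identity for the additive Gaussian channel `Y = X + Ω`,
`Ω ~ N(0, σ²)` independent of `X` with `E[X²] < ∞`: writing the posterior mean as
`f(y) = ∫ x p_G(y−x;σ²) dπ(x) / ∫ p_G(y−x;σ²) dπ(x)`, its derivative equals the
posterior variance divided by the noise variance: `f'(y) = Var(X|Y=y)/σ²`. -/
theorem posterior_mean_derivative (prior : Measure ℝ) [IsProbabilityMeasure prior]
    (σ2 : ℝ) (hσ2 : 0 < σ2)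
    (hX2 : Integrable (fun x => x ^ 2) prior) :
    ∀ y : ℝ,
      deriv (fun z => (∫ x, x * pG (z - x) σ2 ∂prior) / ∫ x, pG (z - x) σ2 ∂prior) y =
        ((∫ x, x ^ 2 * pG (y - x) σ2 ∂prior) / (∫ x, pG (y - x) σ2 ∂prior) -
            ((∫ x, x * pG (y - x) σ2 ∂prior) / ∫ x, pG (y - x) σ2 ∂prior) ^ 2) / σ2 := by
  intro y
  -- integrability of x
  have hX1 : Integrable (fun x : ℝ => x) prior := by
    apply Integrable.mono' (hX2.add (integrable_const 1))
    · exact measurable_id.aestronglyMeasurable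
    · filter_upwards with x
      rw [Real.norm_eq_abs]
      simp only [Pi.add_apply]
      nlinarith [sq_nonneg (|x| - 1), sq_abs x, abs_nonneg x]
  -- the two derivatives
  have hd0 := key_deriv prior hσ2 measurable_const (integrable_const 1)
    (by simpa using hX1) y
  have hd1 := key_deriv prior hσ2 measurable_id hX1
    (by simpa [← sq] using hX2) y
  simp only [one_mul, mul_one, id] at hd0 hd1
  -- positivity of denominator
  have hI0 : Integrable (fun x => pG (y - x) σ2) prior := by
    have := integrable_weighted prior hσ2 measurable_const (integrable_const (1:ℝ)) y
    simpa using this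
  have hg_pos : 0 < ∫ x, pG (y - x) σ2 ∂prior := by
    rw [integral_pos_iff_support_of_nonneg_ae
      (Filter.Eventually.of_forall fun x => (pG_pos hσ2 (y - x)).le) hI0]
    have : Function.support (fun x => pG (y - x) σ2) = Set.univ := by
      ext x; simp [Function.support, (pG_pos hσ2 (y - x)).ne']
    rw [this]
    simp
  have hg_ne : (∫ x, pG (y - x) σ2 ∂prior) ≠ 0 := hg_pos.ne'
  -- hd1 reshaped: note x * x = x^2 and w = id
  have hd1' : HasDerivAt (fun z => ∫ x, x * pG (z - x) σ2 ∂prior)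
      (((∫ x, x ^ 2 * pG (y - x) σ2 ∂prior) - y * ∫ x, x * pG (y - x) σ2 ∂prior) / σ2) y := by
    convert hd1 using 2 <;> simp [sq]
  have hd0' : HasDerivAt (fun z => ∫ x, pG (z - x) σ2 ∂prior)
      (((∫ x, x * pG (y - x) σ2 ∂prior) - y * ∫ x, pG (y - x) σ2 ∂prior) / σ2) y := hd0
  have hdiv := hd1'.div hd0' hg_ne
  rw [show (fun z => (∫ x, x * pG (z - x) σ2 ∂prior) / ∫ x, pG (z - x) σ2 ∂prior) = (fun z => ∫ x, x * pG (z - x) σ2 ∂prior) / (fun z => ∫ x, pG (z - x) σ2 ∂prior) from rfl, hdiv.deriv]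
  set A := ∫ x, x ^ 2 * pG (y - x) σ2 ∂prior
  set B := ∫ x, x * pG (y - x) σ2 ∂prior
  set C := ∫ x, pG (y - x) σ2 ∂prior
  field_simp
  ring
end

section
/- Let A be an M×N random matrix with i.i.d. standard Gaussian entries, and let q ∈ R^N be a fixed nonzero vector. Then the conditional distribution of A given the observation b = A q satisfies A ~ b qᵀ/‖q‖₂² + Ã P_q^⊥ (in distribution), where Ã is an independent copy of A (independent of b) and P_q^⊥ = I_N − q qᵀ/‖q‖₂² is the orthogonal projection onto the complement of span(q). -/
open MeasureTheory ProbabilityTheory Matrix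

instance matrixMeasurableSpace (M N : ℕ) : MeasurableSpace (Matrix (Fin M) (Fin N) ℝ) :=
  inferInstanceAs (MeasurableSpace (Fin M → Fin N → ℝ))

open Real

section Aux

theorem myLintegral_fin_prod {n : ℕ} (μ : Measure ℝ) [SigmaFinite μ]
    (f : Fin n → ℝ → ENNReal) (hf : ∀ i, Measurable (f i)) :
    ∫⁻ x : Fin n → ℝ, ∏ i, f i (x i) ∂(Measure.pi fun _ => μ) = ∏ i, ∫⁻ y, f i y ∂μ := by
  induction n with
  | zero => simp
  | succ n ih =>
    have hmp := measurePreserving_piFinSuccAbove (fun _ : Fin (n + 1) => μ) 0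
    have key := hmp.lintegral_comp (f := fun p : ℝ × (Fin n → ℝ) =>
      f 0 p.1 * ∏ i : Fin n, f i.succ (p.2 i)) ?_
    · have heq : ∀ x : Fin (n+1) → ℝ,
        (fun p : ℝ × (Fin n → ℝ) => f 0 p.1 * ∏ i : Fin n, f i.succ (p.2 i))
          (MeasurableEquiv.piFinSuccAbove (fun _ => ℝ) 0 x) = ∏ i, f i (x i) := by
        intro x
        simp [MeasurableEquiv.piFinSuccAbove, Fin.prod_univ_succ, Fin.zero_succAbove, Fin.tail]
      rw [← Finset.prod_congr rfl (fun i _ => rfl)]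
      calc ∫⁻ x : Fin (n+1) → ℝ, ∏ i, f i (x i) ∂(Measure.pi fun _ => μ)
          = ∫⁻ p : ℝ × (Fin n → ℝ), f 0 p.1 * ∏ i : Fin n, f i.succ (p.2 i)
              ∂(μ.prod (Measure.pi fun _ => μ)) := by
            rw [← key]; exact lintegral_congr fun x => (heq x).symm
        _ = (∫⁻ y, f 0 y ∂μ) * ∏ i : Fin n, ∫⁻ y, f i.succ y ∂μ := by
            rw [lintegral_prod_mul (f := f 0) (g := fun y : Fin n → ℝ => ∏ i, f i.succ (y i))
              (hf 0).aemeasurable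
              ((Finset.measurable_prod Finset.univ fun i _ =>
                (hf i.succ).comp (measurable_pi_apply i)).aemeasurable),
              ih (fun i => f i.succ) (fun i => hf i.succ)]
        _ = ∏ i, ∫⁻ y, f i y ∂μ := (Fin.prod_univ_succ fun i => ∫⁻ y, f i y ∂μ).symm
    · exact ((hf 0).comp measurable_fst).mul
        (Finset.measurable_prod _ fun i _ => (hf i.succ).comp
          ((measurable_pi_apply i).comp measurable_snd))

theorem myLintegral_fintype_prod {ι : Type*} [Fintype ι] (μ : Measure ℝ) [SigmaFinite μ]
    (f : ι → ℝ → ENNReal) (hf : ∀ i, Measurable (f i)) :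
    ∫⁻ x : ι → ℝ, ∏ i, f i (x i) ∂(Measure.pi fun _ => μ) = ∏ i, ∫⁻ y, f i y ∂μ := by
  classical
  let e := (Fintype.equivFin ι).symm
  have hmp := measurePreserving_piCongrLeft (fun _ : ι => μ) e
  have key := hmp.lintegral_comp (f := fun x : ι → ℝ => ∏ i, f i (x i))
    (Finset.measurable_prod _ fun i _ => (hf i).comp (measurable_pi_apply i))
  rw [← key]
  have : ∀ x : Fin (Fintype.card ι) → ℝ,
      (∏ i, f i ((MeasurableEquiv.piCongrLeft (fun _ => ℝ) e x) i))
        = ∏ j, f (e j) (x j) := by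
    intro x
    rw [← e.prod_comp]
    refine Finset.prod_congr rfl fun j _ => ?_
    congr 1
    simp [MeasurableEquiv.piCongrLeft, Equiv.piCongrLeft_apply_apply]
  calc ∫⁻ x, (fun x : ι → ℝ => ∏ i, f i (x i)) (MeasurableEquiv.piCongrLeft (fun _ => ℝ) e x)
        ∂(Measure.pi fun _ => μ)
      = ∫⁻ x : Fin (Fintype.card ι) → ℝ, ∏ j, f (e j) (x j) ∂(Measure.pi fun _ => μ) :=
        lintegral_congr fun x => this x
    _ = ∏ j, ∫⁻ y, f (e j) y ∂μ := myLintegral_fin_prod μ _ (fun j => hf (e j))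
    _ = ∏ i, ∫⁻ y, f i y ∂μ := e.prod_comp fun i => ∫⁻ y, f i y ∂μ

end Aux

theorem myMap_withDensity_equiv {α β : Type*} [MeasurableSpace α] [MeasurableSpace β]
    (e : α ≃ᵐ β) (ν : Measure α) (g : α → ENNReal) (hg : Measurable g) :
    Measure.map e (ν.withDensity g) = (Measure.map e ν).withDensity (g ∘ e.symm) := by
  ext s hs
  rw [Measure.map_apply e.measurable hs, withDensity_apply _ (e.measurable hs),
    withDensity_apply _ hs,
    setLIntegral_map hs (hg.comp e.symm.measurable) e.measurable]
  refine setLIntegral_congr_fun (e.measurable hs) (fun x _ => ?_)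
  simp

theorem myGaussian_pi_withDensity (ι : Type*) [Fintype ι] :
    (Measure.pi fun _ : ι => gaussianReal 0 1) =
      (Measure.pi fun _ : ι => (volume : Measure ℝ)).withDensity
        (fun x => ∏ i, gaussianPDF 0 1 (x i)) := by
  classical
  refine Measure.pi_eq fun s hs => ?_
  rw [withDensity_apply _ (MeasurableSet.univ_pi hs),
    ← lintegral_indicator (MeasurableSet.univ_pi hs) (fun x : ι → ℝ => ∏ i, gaussianPDF 0 1 (x i))]
  have hind : ∀ x : ι → ℝ,
      (Set.univ.pi s).indicator (fun x => ∏ i, gaussianPDF 0 1 (x i)) x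
        = ∏ i, (s i).indicator (gaussianPDF 0 1) (x i) := by
    intro x
    by_cases h : x ∈ Set.univ.pi s
    · rw [Set.indicator_of_mem h]
      exact Finset.prod_congr rfl fun i _ =>
        (Set.indicator_of_mem (h i (Set.mem_univ i)) _).symm
    · rw [Set.indicator_of_notMem h]
      rw [Set.mem_univ_pi] at h
      push_neg at h
      obtain ⟨i, hi⟩ := h
      exact (Finset.prod_eq_zero (Finset.mem_univ i)
        (Set.indicator_of_notMem hi _)).symm
  rw [lintegral_congr hind,
    myLintegral_fintype_prod volume (fun i => (s i).indicator (gaussianPDF 0 1))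
      (fun i => (measurable_gaussianPDF 0 1).indicator (hs i))]
  refine Finset.prod_congr rfl fun i _ => ?_
  rw [gaussianReal_of_var_ne_zero 0 one_ne_zero, withDensity_apply _ (hs i),
    lintegral_indicator (hs i) (gaussianPDF 0 1)]

theorem myMap_rot {ι : Type*} [Fintype ι] (f : (ι → ℝ) →ₗ[ℝ] (ι → ℝ))
    (hinv : ∀ x, f (f x) = x)
    (hnorm : ∀ x : ι → ℝ, ∑ i, (f x i) ^ 2 = ∑ i, (x i) ^ 2) :
    Measure.map f (Measure.pi fun _ : ι => gaussianReal 0 1)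
      = Measure.pi fun _ : ι => gaussianReal 0 1 := by
  classical
  have hfm : Measurable f := (LinearMap.continuous_on_pi f).measurable
  have hdet : LinearMap.det f * LinearMap.det f = 1 := by
    have hcomp : f.comp f = LinearMap.id := LinearMap.ext fun x => hinv x
    rw [← LinearMap.det_comp, hcomp, LinearMap.det_id]
  have hdet1 : LinearMap.det f = 1 ∨ LinearMap.det f = -1 := mul_self_eq_one_iff.mp hdet
  have hdetne : LinearMap.det f ≠ 0 := by rcases hdet1 with h | h <;> rw [h] <;> norm_num
  have hvol : Measure.map f (volume : Measure (ι → ℝ)) = volume := by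
    rw [Real.map_linearMap_volume_pi_eq_smul_volume_pi hdetne]
    rcases hdet1 with h | h <;> rw [h] <;> norm_num
  let e : (ι → ℝ) ≃ᵐ (ι → ℝ) :=
    { toFun := f
      invFun := f
      left_inv := hinv
      right_inv := hinv
      measurable_toFun := hfm
      measurable_invFun := hfm }
  have hgmeas : Measurable fun x : ι → ℝ => ∏ i, gaussianPDF 0 1 (x i) :=
    Finset.measurable_prod _ fun i _ =>
      (measurable_gaussianPDF 0 1).comp (measurable_pi_apply i)
  have hginv : ∀ x : ι → ℝ, (∏ i, gaussianPDF 0 1 (f x i)) = ∏ i, gaussianPDF 0 1 (x i) := by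
    intro x
    have key : ∀ y : ι → ℝ, ∏ i, gaussianPDF 0 1 (y i)
        = ENNReal.ofReal ((√(2 * π))⁻¹ ^ Fintype.card ι * rexp (-(∑ i, (y i) ^ 2) / 2)) := by
      intro y
      simp only [gaussianPDF]
      rw [← ENNReal.ofReal_prod_of_nonneg (fun i _ => gaussianPDFReal_nonneg 0 1 (y i))]
      congr 1
      simp only [gaussianPDFReal, NNReal.coe_one, mul_one, sub_zero]
      rw [Finset.prod_mul_distrib, Finset.prod_const, ← Real.exp_sum, Finset.card_univ]
      congr 1
      simp only [neg_div, Finset.sum_neg_distrib, Finset.sum_div]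
    rw [key, key, hnorm]
  calc Measure.map f (Measure.pi fun _ : ι => gaussianReal 0 1)
      = Measure.map e ((Measure.pi fun _ : ι => (volume : Measure ℝ)).withDensity
          (fun x => ∏ i, gaussianPDF 0 1 (x i))) := by
        rw [myGaussian_pi_withDensity]; rfl
    _ = (Measure.map e (Measure.pi fun _ : ι => (volume : Measure ℝ))).withDensity
          ((fun x => ∏ i, gaussianPDF 0 1 (x i)) ∘ e.symm) :=
        myMap_withDensity_equiv e _ _ hgmeas
    _ = Measure.pi fun _ : ι => gaussianReal 0 1 := by
        have h1 : Measure.map e (Measure.pi fun _ : ι => (volume : Measure ℝ))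
            = Measure.pi fun _ : ι => (volume : Measure ℝ) := by
          have : (Measure.pi fun _ : ι => (volume : Measure ℝ)) = (volume : Measure (ι → ℝ)) :=
            (volume_pi).symm
          rw [this]; exact hvol
        rw [h1, myGaussian_pi_withDensity]
        congr 1
        funext x
        exact hginv x

section MatrixAlg

variable {M N : ℕ}

noncomputable def Bpar (q : Fin N → ℝ) : Matrix (Fin N) (Fin N) ℝ :=
  Matrix.of fun i j => q i * q j / ∑ l, q l ^ 2

noncomputable def Bperp (q : Fin N → ℝ) : Matrix (Fin N) (Fin N) ℝ := 1 - Bpar q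

lemma Bperp_def (q : Fin N → ℝ) : Bperp q = 1 - Bpar q := rfl

lemma sum_sq_ne_zero {q : Fin N → ℝ} (hq : q ≠ 0) : (∑ l, q l ^ 2) ≠ 0 := by
  intro h
  apply hq
  funext l
  have := (Finset.sum_eq_zero_iff_of_nonneg (fun i _ => sq_nonneg (q i))).mp h l
    (Finset.mem_univ l)
  exact pow_eq_zero_iff (n := 2) (by norm_num) |>.mp this

lemma Bpar_mulVec {q : Fin N → ℝ} (hS : (∑ l, q l ^ 2) ≠ 0) : Bpar q *ᵥ q = q := by
  funext i
  simp only [Bpar, Matrix.mulVec, dotProduct, Matrix.of_apply]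
  have : ∀ k, q i * q k / (∑ l, q l ^ 2) * q k = q i * (q k ^ 2 / ∑ l, q l ^ 2) := fun k => by
    ring
  rw [Finset.sum_congr rfl fun k _ => this k, ← Finset.mul_sum, ← Finset.sum_div, div_self hS,
    mul_one]

lemma Bperp_mulVec {q : Fin N → ℝ} (hS : (∑ l, q l ^ 2) ≠ 0) : Bperp q *ᵥ q = 0 := by
  rw [Bperp_def, Matrix.sub_mulVec, Matrix.one_mulVec, Bpar_mulVec hS, sub_self]

lemma mul_Bpar (q : Fin N → ℝ) (m : Matrix (Fin M) (Fin N) ℝ) :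
    m * Bpar q = Matrix.of fun i j => (m *ᵥ q) i * q j / ∑ l, q l ^ 2 := by
  ext i j
  simp only [Matrix.mul_apply, Bpar, Matrix.of_apply, Matrix.mulVec, dotProduct]
  have : ∀ k, m i k * (q k * q j / ∑ l, q l ^ 2) = m i k * q k * (q j / ∑ l, q l ^ 2) :=
    fun k => by ring
  rw [Finset.sum_congr rfl fun k _ => this k, ← Finset.sum_mul, mul_div_assoc]

lemma Bpar_mul_Bpar {q : Fin N → ℝ} (hS : (∑ l, q l ^ 2) ≠ 0) :
    Bpar q * Bpar q = Bpar q := by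
  ext i j
  simp only [Matrix.mul_apply, Bpar, Matrix.of_apply]
  have : ∀ k, q i * q k / (∑ l, q l ^ 2) * (q k * q j / ∑ l, q l ^ 2)
      = q k ^ 2 * (q i * q j / ((∑ l, q l ^ 2) * ∑ l, q l ^ 2)) := fun k => by ring
  rw [Finset.sum_congr rfl fun k _ => this k, ← Finset.sum_mul]
  field_simp

lemma Bpar_mul_Bperp {q : Fin N → ℝ} (hS : (∑ l, q l ^ 2) ≠ 0) : Bpar q * Bperp q = 0 := by
  rw [Bperp_def, Matrix.mul_sub, Matrix.mul_one, Bpar_mul_Bpar hS, sub_self]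

lemma Bperp_mul_Bpar {q : Fin N → ℝ} (hS : (∑ l, q l ^ 2) ≠ 0) : Bperp q * Bpar q = 0 := by
  rw [Bperp_def, Matrix.sub_mul, Matrix.one_mul, Bpar_mul_Bpar hS, sub_self]

lemma Bperp_mul_Bperp {q : Fin N → ℝ} (hS : (∑ l, q l ^ 2) ≠ 0) :
    Bperp q * Bperp q = Bperp q := by
  nth_rewrite 1 [Bperp_def]
  rw [Matrix.sub_mul, Matrix.one_mul, Bpar_mul_Bperp hS, sub_zero]

lemma Bpar_add_Bperp (q : Fin N → ℝ) : Bpar q + Bperp q = 1 := by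
  rw [Bperp_def, add_sub_cancel]

lemma combo1 {q : Fin N → ℝ} (hS : (∑ l, q l ^ 2) ≠ 0) (X Y : Matrix (Fin M) (Fin N) ℝ) :
    (X * Bpar q + Y * Bperp q) * Bpar q + (X * Bperp q + Y * Bpar q) * Bperp q = X := by
  rw [Matrix.add_mul, Matrix.add_mul, Matrix.mul_assoc, Matrix.mul_assoc, Matrix.mul_assoc,
    Matrix.mul_assoc, Bpar_mul_Bpar hS, Bperp_mul_Bpar hS, Bperp_mul_Bperp hS,
    Bpar_mul_Bperp hS, Matrix.mul_zero]
  simp only [add_zero, zero_add]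
  rw [← Matrix.mul_add, Bpar_add_Bperp, Matrix.mul_one]

lemma combo2 {q : Fin N → ℝ} (hS : (∑ l, q l ^ 2) ≠ 0) (X Y : Matrix (Fin M) (Fin N) ℝ) :
    (X * Bpar q + Y * Bperp q) * Bperp q + (X * Bperp q + Y * Bpar q) * Bpar q = Y := by
  rw [Matrix.add_mul, Matrix.add_mul, Matrix.mul_assoc, Matrix.mul_assoc, Matrix.mul_assoc,
    Matrix.mul_assoc, Bpar_mul_Bperp hS, Bperp_mul_Bperp hS, Bperp_mul_Bpar hS,
    Bpar_mul_Bpar hS, Matrix.mul_zero]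
  simp only [add_zero, zero_add]
  rw [← Matrix.mul_add, add_comm (Bperp q), Bpar_add_Bperp, Matrix.mul_one]

lemma row_identity {q : Fin N → ℝ} (hS : (∑ l, q l ^ 2) ≠ 0) (r s : Fin N → ℝ) :
    ((∑ j, (∑ k, (r k * Bpar q k j + s k * Bperp q k j)) ^ 2)
      + ∑ j, (∑ k, (r k * Bperp q k j + s k * Bpar q k j)) ^ 2)
      = (∑ j, r j ^ 2) + ∑ j, s j ^ 2 := by
  set S := ∑ l, q l ^ 2 with hSdef
  set α := ∑ k, r k * q k with hα
  set β := ∑ k, s k * q k with hβ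
  set d := (α - β) / S with hd
  have hrP : ∀ (t : Fin N → ℝ) (j), ∑ k, t k * Bpar q k j = (∑ k, t k * q k) * q j / S := by
    intro t j
    simp only [Bpar, Matrix.of_apply]
    have : ∀ k, t k * (q k * q j / S) = t k * q k * (q j / S) := fun k => by ring
    rw [Finset.sum_congr rfl fun k _ => this k, ← Finset.sum_mul, mul_div_assoc]
  have hrQ : ∀ (t : Fin N → ℝ) (j), ∑ k, t k * Bperp q k j
      = t j - (∑ k, t k * q k) * q j / S := by
    intro t j
    simp only [Bperp_def, Matrix.sub_apply, Matrix.one_apply, Bpar, Matrix.of_apply, mul_sub]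
    rw [Finset.sum_sub_distrib]
    congr 1
    · simp [mul_ite, Finset.sum_ite_eq']
    · exact hrP t j
  have step1 : ∀ j, (∑ k, (r k * Bpar q k j + s k * Bperp q k j)) = s j + d * q j := by
    intro j
    rw [Finset.sum_add_distrib, hrP r j, hrQ s j, hd, ← hα, ← hβ]
    field_simp
    ring
  have step2 : ∀ j, (∑ k, (r k * Bperp q k j + s k * Bpar q k j)) = r j - d * q j := by
    intro j
    rw [Finset.sum_add_distrib, hrQ r j, hrP s j, hd, ← hα, ← hβ]
    field_simp
    ring
  rw [Finset.sum_congr rfl fun j _ => congrArg (· ^ 2) (step1 j),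
    Finset.sum_congr rfl fun j _ => congrArg (· ^ 2) (step2 j)]
  have e1 : ∑ j, (s j + d * q j) ^ 2 = (∑ j, s j ^ 2) + 2 * d * β + d ^ 2 * S := by
    have : ∀ j, (s j + d * q j) ^ 2 = s j ^ 2 + 2 * d * (s j * q j) + d ^ 2 * q j ^ 2 :=
      fun j => by ring
    rw [Finset.sum_congr rfl fun j _ => this j]
    simp only [Finset.sum_add_distrib, ← Finset.mul_sum, hβ, hSdef]
  have e2 : ∑ j, (r j - d * q j) ^ 2 = (∑ j, r j ^ 2) - 2 * d * α + d ^ 2 * S := by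
    have : ∀ j, (r j - d * q j) ^ 2 = r j ^ 2 - 2 * d * (r j * q j) + d ^ 2 * q j ^ 2 :=
      fun j => by ring
    rw [Finset.sum_congr rfl fun j _ => this j]
    simp only [Finset.sum_add_distrib, Finset.sum_sub_distrib, ← Finset.mul_sum, hα, hSdef]
  have hdS : d * S = α - β := by
    rw [hd]
    field_simp
  rw [e1, e2]
  linear_combination 2 * d * hdS

end MatrixAlg
section LMapSec

variable {M N : ℕ}

noncomputable def Ltf (q : Fin N → ℝ) :
    ((Fin M × Fin N ⊕ Fin M × Fin N) → ℝ) → ((Fin M × Fin N ⊕ Fin M × Fin N) → ℝ) :=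
  fun z => Sum.elim
    (fun p => ∑ k, (z (Sum.inl (p.1, k)) * Bpar q k p.2 + z (Sum.inr (p.1, k)) * Bperp q k p.2))
    (fun p => ∑ k, (z (Sum.inl (p.1, k)) * Bperp q k p.2 + z (Sum.inr (p.1, k)) * Bpar q k p.2))

noncomputable def Lmap (q : Fin N → ℝ) :
    ((Fin M × Fin N ⊕ Fin M × Fin N) → ℝ) →ₗ[ℝ] ((Fin M × Fin N ⊕ Fin M × Fin N) → ℝ) where
  toFun := Ltf q
  map_add' := by
    intro z w
    funext p
    cases p with
    | inl p =>
      simp only [Ltf, Sum.elim_inl, Pi.add_apply, add_mul]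
      rw [← Finset.sum_add_distrib]
      exact Finset.sum_congr rfl fun k _ => by ring
    | inr p =>
      simp only [Ltf, Sum.elim_inr, Pi.add_apply, add_mul]
      rw [← Finset.sum_add_distrib]
      exact Finset.sum_congr rfl fun k _ => by ring
  map_smul' := by
    intro a z
    funext p
    cases p with
    | inl p =>
      simp only [Ltf, Sum.elim_inl, Pi.smul_apply, smul_eq_mul, RingHom.id_apply,
        Finset.mul_sum]
      exact Finset.sum_congr rfl fun k _ => by ring
    | inr p =>
      simp only [Ltf, Sum.elim_inr, Pi.smul_apply, smul_eq_mul, RingHom.id_apply,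
        Finset.mul_sum]
      exact Finset.sum_congr rfl fun k _ => by ring

lemma Ltf_inl (q : Fin N → ℝ) (z : (Fin M × Fin N ⊕ Fin M × Fin N) → ℝ) :
    (Matrix.of fun i j => Ltf q z (Sum.inl (i, j)))
      = (Matrix.of fun i j => z (Sum.inl (i, j))) * Bpar q
        + (Matrix.of fun i j => z (Sum.inr (i, j))) * Bperp q := by
  ext i j
  simp only [Ltf, Sum.elim_inl, Matrix.of_apply, Matrix.add_apply, Matrix.mul_apply]
  rw [Finset.sum_add_distrib]

lemma Ltf_inr (q : Fin N → ℝ) (z : (Fin M × Fin N ⊕ Fin M × Fin N) → ℝ) :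
    (Matrix.of fun i j => Ltf q z (Sum.inr (i, j)))
      = (Matrix.of fun i j => z (Sum.inl (i, j))) * Bperp q
        + (Matrix.of fun i j => z (Sum.inr (i, j))) * Bpar q := by
  ext i j
  simp only [Ltf, Sum.elim_inr, Matrix.of_apply, Matrix.add_apply, Matrix.mul_apply]
  rw [Finset.sum_add_distrib]

lemma Ltf_invol {q : Fin N → ℝ} (hS : (∑ l, q l ^ 2) ≠ 0)
    (z : (Fin M × Fin N ⊕ Fin M × Fin N) → ℝ) : Ltf q (Ltf q z) = z := by
  funext p
  cases p with
  | inl p =>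
    have h : (Matrix.of fun i j => Ltf q (Ltf q z) (Sum.inl (i, j)))
        = Matrix.of fun i j => z (Sum.inl (i, j)) := by
      rw [Ltf_inl q (Ltf q z), Ltf_inl q z, Ltf_inr q z, combo1 hS]
    simpa using congrFun (congrFun h p.1) p.2
  | inr p =>
    have h : (Matrix.of fun i j => Ltf q (Ltf q z) (Sum.inr (i, j)))
        = Matrix.of fun i j => z (Sum.inr (i, j)) := by
      rw [Ltf_inr q (Ltf q z), Ltf_inl q z, Ltf_inr q z, combo2 hS]
    simpa using congrFun (congrFun h p.1) p.2

lemma Ltf_norm {q : Fin N → ℝ} (hS : (∑ l, q l ^ 2) ≠ 0)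
    (z : (Fin M × Fin N ⊕ Fin M × Fin N) → ℝ) :
    ∑ p, (Ltf q z p) ^ 2 = ∑ p, (z p) ^ 2 := by
  rw [Fintype.sum_sum_type, Fintype.sum_sum_type,
    Fintype.sum_prod_type, Fintype.sum_prod_type, Fintype.sum_prod_type, Fintype.sum_prod_type,
    ← Finset.sum_add_distrib, ← Finset.sum_add_distrib]
  refine Finset.sum_congr rfl fun i _ => ?_
  exact row_identity hS (fun k => z (Sum.inl (i, k))) (fun k => z (Sum.inr (i, k)))

end LMapSec

/-- Rank-one case of Bolthausen's conditioning lemma for Gaussian matrices: if `A` and `Ã`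
are independent `M × N` matrices with i.i.d. standard Gaussian entries and `q ≠ 0`, then
the pair `(A, A q)` has the same joint law as
`((A q) qᵀ/‖q‖² + Ã P_q^⊥, A q)`, where `P_q^⊥ = I − q qᵀ/‖q‖²`. -/
theorem bolthausen_conditioning {Ωs : Type*} [MeasurableSpace Ωs]
    (μ : Measure Ωs) [IsProbabilityMeasure μ] (M N : ℕ)
    (A Atil : Ωs → Matrix (Fin M) (Fin N) ℝ)
    (hAm : Measurable A) (hAtilm : Measurable Atil)
    (hA : Measure.map (fun ω (p : Fin M × Fin N) => A ω p.1 p.2) μ =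
      Measure.pi fun _ : Fin M × Fin N => gaussianReal 0 1)
    (hAtil : Measure.map (fun ω (p : Fin M × Fin N) => Atil ω p.1 p.2) μ =
      Measure.pi fun _ : Fin M × Fin N => gaussianReal 0 1)
    (hindep : IndepFun A Atil μ)
    (q : Fin N → ℝ) (hq : q ≠ 0) :
    Measure.map (fun ω => (A ω, A ω *ᵥ q)) μ =
      Measure.map
        (fun ω =>
          ((Matrix.of fun i j => (A ω *ᵥ q) i * q j / ∑ l, q l ^ 2) +
              Atil ω * (1 - Matrix.of fun i j => q i * q j / ∑ l, q l ^ 2),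
            A ω *ᵥ q))
        μ := by
  classical
  have hS : (∑ l, q l ^ 2) ≠ 0 := sum_sq_ne_zero hq
  have hu : Measurable fun (m : Matrix (Fin M) (Fin N) ℝ) (p : Fin M × Fin N) => m p.1 p.2 :=
    measurable_pi_lambda _ fun p => (measurable_pi_apply p.2).comp (measurable_pi_apply p.1)
  have hXm : Measurable (fun ω (p : Fin M × Fin N) => A ω p.1 p.2) := hu.comp hAm
  have hYm : Measurable (fun ω (p : Fin M × Fin N) => Atil ω p.1 p.2) := hu.comp hAtilm
  have hindepXY : IndepFun (fun ω (p : Fin M × Fin N) => A ω p.1 p.2)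
      (fun ω (p : Fin M × Fin N) => Atil ω p.1 p.2) μ := hindep.comp hu hu
  have hXY : Measure.map
      (fun ω => ((fun (p : Fin M × Fin N) => A ω p.1 p.2),
                 (fun (p : Fin M × Fin N) => Atil ω p.1 p.2))) μ
      = (Measure.pi fun _ : Fin M × Fin N => gaussianReal 0 1).prod
          (Measure.pi fun _ : Fin M × Fin N => gaussianReal 0 1) := by
    rw [(indepFun_iff_map_prod_eq_prod_map_map hXm.aemeasurable hYm.aemeasurable).mp hindepXY,
      hA, hAtil]
  -- the two post-processing maps
  have hcm : Measurable fun (x : Fin M × Fin N → ℝ) => (Matrix.of fun i j => x (i, j) :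
      Matrix (Fin M) (Fin N) ℝ) :=
    measurable_pi_lambda _ fun i => measurable_pi_lambda _ fun j => measurable_pi_apply (i, j)
  have hmv : Measurable fun (x : Fin M × Fin N → ℝ) =>
      (Matrix.of fun i j => x (i, j) : Matrix (Fin M) (Fin N) ℝ) *ᵥ q := by
    refine measurable_pi_lambda _ fun i => ?_
    show Measurable fun (x : Fin M × Fin N → ℝ) => ∑ k, x (i, k) * q k
    exact Finset.measurable_sum Finset.univ fun k _ =>
      (measurable_pi_apply (i, k)).mul_const (q k) (M := ℝ)
  have hΦm : Measurable fun (v : (Fin M × Fin N → ℝ) × (Fin M × Fin N → ℝ)) =>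
      ((Matrix.of fun i j => v.1 (i, j) : Matrix (Fin M) (Fin N) ℝ),
        (Matrix.of fun i j => v.1 (i, j) : Matrix (Fin M) (Fin N) ℝ) *ᵥ q) :=
    (hcm.comp measurable_fst).prodMk (hmv.comp measurable_fst)
  have hΨm : Measurable fun (v : (Fin M × Fin N → ℝ) × (Fin M × Fin N → ℝ)) =>
      ((Matrix.of fun i j =>
          ((Matrix.of fun i j => v.1 (i, j) : Matrix (Fin M) (Fin N) ℝ) *ᵥ q) i * q j
            / ∑ l, q l ^ 2)
          + (Matrix.of fun i j => v.2 (i, j) : Matrix (Fin M) (Fin N) ℝ) * Bperp q,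
        (Matrix.of fun i j => v.1 (i, j) : Matrix (Fin M) (Fin N) ℝ) *ᵥ q) := by
    refine Measurable.prodMk ?_ (hmv.comp measurable_fst)
    refine measurable_pi_lambda _ fun i => measurable_pi_lambda _ fun j => ?_
    show Measurable fun (v : (Fin M × Fin N → ℝ) × (Fin M × Fin N → ℝ)) =>
      (∑ k, v.1 (i, k) * q k) * q j / (∑ l, q l ^ 2) + ∑ k, v.2 (i, k) * Bperp q k j
    refine Measurable.add ?_ ?_
    · exact ((Finset.measurable_sum Finset.univ fun k _ =>
        ((measurable_pi_apply (i, k)).comp measurable_fst).mul_const (q k) (M := ℝ)).mul_const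
          (q j)).div_const _
    · exact Finset.measurable_sum Finset.univ fun k _ =>
        ((measurable_pi_apply (i, k)).comp measurable_snd).mul_const (Bperp q k j) (M := ℝ)
  have hpairm : Measurable fun ω =>
      ((fun (p : Fin M × Fin N) => A ω p.1 p.2), (fun (p : Fin M × Fin N) => Atil ω p.1 p.2)) :=
    hXm.prodMk hYm
  have hLHS : (fun ω => (A ω, A ω *ᵥ q))
      = (fun (v : (Fin M × Fin N → ℝ) × (Fin M × Fin N → ℝ)) =>
          ((Matrix.of fun i j => v.1 (i, j) : Matrix (Fin M) (Fin N) ℝ),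
            (Matrix.of fun i j => v.1 (i, j) : Matrix (Fin M) (Fin N) ℝ) *ᵥ q))
        ∘ (fun ω => ((fun (p : Fin M × Fin N) => A ω p.1 p.2),
            (fun (p : Fin M × Fin N) => Atil ω p.1 p.2))) := rfl
  have hRHS : (fun ω =>
        ((Matrix.of fun i j => (A ω *ᵥ q) i * q j / ∑ l, q l ^ 2) +
            Atil ω * (1 - Matrix.of fun i j => q i * q j / ∑ l, q l ^ 2),
          A ω *ᵥ q))
      = (fun (v : (Fin M × Fin N → ℝ) × (Fin M × Fin N → ℝ)) =>
          ((Matrix.of fun i j =>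
              ((Matrix.of fun i j => v.1 (i, j) : Matrix (Fin M) (Fin N) ℝ) *ᵥ q) i * q j
                / ∑ l, q l ^ 2)
              + (Matrix.of fun i j => v.2 (i, j) : Matrix (Fin M) (Fin N) ℝ) * Bperp q,
            (Matrix.of fun i j => v.1 (i, j) : Matrix (Fin M) (Fin N) ℝ) *ᵥ q))
        ∘ (fun ω => ((fun (p : Fin M × Fin N) => A ω p.1 p.2),
            (fun (p : Fin M × Fin N) => Atil ω p.1 p.2))) := rfl
  rw [hLHS, hRHS, ← Measure.map_map hΦm hpairm, ← Measure.map_map hΨm hpairm, hXY]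
  -- product measure as image of the big pi measure
  have hEmp := measurePreserving_sumPiEquivProdPi_symm
    (fun _ : (Fin M × Fin N) ⊕ (Fin M × Fin N) => gaussianReal 0 1)
  have hprod : (Measure.pi fun _ : Fin M × Fin N => gaussianReal 0 1).prod
      (Measure.pi fun _ : Fin M × Fin N => gaussianReal 0 1)
      = Measure.map (MeasurableEquiv.sumPiEquivProdPi
          (fun _ : (Fin M × Fin N) ⊕ (Fin M × Fin N) => ℝ))
        (Measure.pi fun _ : (Fin M × Fin N) ⊕ (Fin M × Fin N) => gaussianReal 0 1) := by
    rw [← hEmp.map_eq, MeasurableEquiv.map_map_symm]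
  rw [hprod, Measure.map_map hΦm (MeasurableEquiv.measurable _),
    Measure.map_map hΨm (MeasurableEquiv.measurable _)]
  -- rotation invariance
  have hLm : Measurable (Ltf (M := M) q) :=
    (LinearMap.continuous_on_pi (Lmap (M := M) q)).measurable
  have hrot : Measure.map (Ltf (M := M) q)
      (Measure.pi fun _ : (Fin M × Fin N) ⊕ (Fin M × Fin N) => gaussianReal 0 1)
      = Measure.pi fun _ : (Fin M × Fin N) ⊕ (Fin M × Fin N) => gaussianReal 0 1 :=
    myMap_rot (Lmap (M := M) q) (fun z => Ltf_invol hS z) (fun z => Ltf_norm hS z)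
  have hcomp : ((fun (v : (Fin M × Fin N → ℝ) × (Fin M × Fin N → ℝ)) =>
          ((Matrix.of fun i j =>
              ((Matrix.of fun i j => v.1 (i, j) : Matrix (Fin M) (Fin N) ℝ) *ᵥ q) i * q j
                / ∑ l, q l ^ 2)
              + (Matrix.of fun i j => v.2 (i, j) : Matrix (Fin M) (Fin N) ℝ) * Bperp q,
            (Matrix.of fun i j => v.1 (i, j) : Matrix (Fin M) (Fin N) ℝ) *ᵥ q))
        ∘ (MeasurableEquiv.sumPiEquivProdPi (fun _ : (Fin M × Fin N) ⊕ (Fin M × Fin N) => ℝ)))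
      = (((fun (v : (Fin M × Fin N → ℝ) × (Fin M × Fin N → ℝ)) =>
          ((Matrix.of fun i j => v.1 (i, j) : Matrix (Fin M) (Fin N) ℝ),
            (Matrix.of fun i j => v.1 (i, j) : Matrix (Fin M) (Fin N) ℝ) *ᵥ q))
        ∘ (MeasurableEquiv.sumPiEquivProdPi (fun _ : (Fin M × Fin N) ⊕ (Fin M × Fin N) => ℝ)))
        ∘ (Ltf (M := M) q)) := by
    funext z
    show ((Matrix.of fun i j =>
        ((Matrix.of fun i j => z (Sum.inl (i, j)) : Matrix (Fin M) (Fin N) ℝ) *ᵥ q) i * q j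
          / ∑ l, q l ^ 2)
        + (Matrix.of fun i j => z (Sum.inr (i, j)) : Matrix (Fin M) (Fin N) ℝ) * Bperp q,
      (Matrix.of fun i j => z (Sum.inl (i, j)) : Matrix (Fin M) (Fin N) ℝ) *ᵥ q)
      = ((Matrix.of fun i j => Ltf q z (Sum.inl (i, j)) : Matrix (Fin M) (Fin N) ℝ),
        (Matrix.of fun i j => Ltf q z (Sum.inl (i, j)) : Matrix (Fin M) (Fin N) ℝ) *ᵥ q)
    have h2 : (Matrix.of fun i j => Ltf q z (Sum.inl (i, j)) : Matrix (Fin M) (Fin N) ℝ) *ᵥ q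
        = (Matrix.of fun i j => z (Sum.inl (i, j)) : Matrix (Fin M) (Fin N) ℝ) *ᵥ q := by
      rw [Ltf_inl q z, Matrix.add_mulVec, ← Matrix.mulVec_mulVec, ← Matrix.mulVec_mulVec,
        Bpar_mulVec hS, Bperp_mulVec hS, Matrix.mulVec_zero, add_zero]
    have h3 : (Matrix.of fun i j => Ltf q z (Sum.inl (i, j)) : Matrix (Fin M) (Fin N) ℝ)
        = (Matrix.of fun i j =>
            (((Matrix.of fun i j => z (Sum.inl (i, j)) : Matrix (Fin M) (Fin N) ℝ)) *ᵥ q) i * q j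
              / ∑ l, q l ^ 2)
          + (Matrix.of fun i j => z (Sum.inr (i, j)) : Matrix (Fin M) (Fin N) ℝ) * Bperp q := by
      rw [Ltf_inl q z, mul_Bpar q]
    rw [h2, h3]
  rw [hcomp, ← Measure.map_map (hΦm.comp (MeasurableEquiv.measurable _)) hLm, hrot]
end
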